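/- arXiv:2503.19631 — 3 statements merged into one kernel-verified Lean document; each statement's English description precedes it below -/
import Mathlib

section
/- Let A be a p×q 0-1 matrix and B a q×r 0-1 matrix with product C = A·B. Suppose each row A_{i*} has an assigned 0-1 center a(i) with ham(A_{i*}, a(i)) ≤ s, and each column B_{*j} has an assigned 0-1 center b(j) with ham(B_{*j}, b(j)) ≤ t. Define D'_{ij} as the inner product of a(i) and b(j). Then |C_{ij} − D'_{ij}| ≤ s + t for all i, j. -/
open Finset

theorem approx_product_error_two_sided_centers (p q r s t : ℕ)
    (A : Matrix (Fin p) (Fin q) ℤ) (B : Matrix (Fin q) (Fin r) ℤ)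
    (hA : ∀ i h, A i h = 0 ∨ A i h = 1) (hB : ∀ h j, B h j = 0 ∨ B h j = 1)
    (a : Fin p → (Fin q → ℤ)) (b : Fin r → (Fin q → ℤ))
    (ha01 : ∀ i h, a i h = 0 ∨ a i h = 1) (hb01 : ∀ j h, b j h = 0 ∨ b j h = 1)
    (ha : ∀ i, (Finset.univ.filter (fun h => A i h ≠ a i h)).card ≤ s)
    (hb : ∀ j, (Finset.univ.filter (fun h => B h j ≠ b j h)).card ≤ t)
    (C : Matrix (Fin p) (Fin r) ℤ) (hC : C = A * B)
    (D' : Matrix (Fin p) (Fin r) ℤ) (hD' : ∀ i j, D' i j = ∑ h, a i h * b j h) :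
    ∀ i j, |C i j - D' i j| ≤ (s : ℤ) + (t : ℤ) := by
  intro i j
  have hCij : C i j = ∑ h, A i h * B h j := by
    rw [hC]; simp [Matrix.mul_apply]
  have key : C i j - D' i j
      = (∑ h, (A i h - a i h) * B h j) + (∑ h, a i h * (B h j - b j h)) := by
    rw [hCij, hD', ← Finset.sum_add_distrib, ← Finset.sum_sub_distrib]
    congr 1; ext h; ring
  rw [key]
  have h1 : |∑ h, (A i h - a i h) * B h j| ≤ (s : ℤ) := by
    calc |∑ h, (A i h - a i h) * B h j| ≤ ∑ h, |(A i h - a i h) * B h j| :=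
          Finset.abs_sum_le_sum_abs _ _
      _ ≤ ∑ h ∈ Finset.univ.filter (fun h => A i h ≠ a i h), 1 := by
          rw [Finset.sum_filter]
          apply Finset.sum_le_sum
          intro h _
          by_cases hne : A i h = a i h
          · simp [hne]
          · rw [if_pos hne]
            rcases hA i h with h1 | h1 <;> rcases ha01 i h with h2 | h2 <;>
              rcases hB h j with h3 | h3 <;> simp_all
      _ ≤ (s : ℤ) := by
          simpa using (Int.ofNat_le.mpr (ha i))
  have h2 : |∑ h, a i h * (B h j - b j h)| ≤ (t : ℤ) := by
    calc |∑ h, a i h * (B h j - b j h)| ≤ ∑ h, |a i h * (B h j - b j h)| :=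
          Finset.abs_sum_le_sum_abs _ _
      _ ≤ ∑ h ∈ Finset.univ.filter (fun h => B h j ≠ b j h), 1 := by
          rw [Finset.sum_filter]
          apply Finset.sum_le_sum
          intro h _
          by_cases hne : B h j = b j h
          · simp [hne]
          · rw [if_pos hne]
            rcases hB h j with h1 | h1 <;> rcases hb01 j h with h2 | h2 <;>
              rcases ha01 i h with h3 | h3 <;> simp_all
      _ ≤ (t : ℤ) := by
          simpa using (Int.ofNat_le.mpr (hb j))
  calc |(∑ h, (A i h - a i h) * B h j) + (∑ h, a i h * (B h j - b j h))|
      ≤ |∑ h, (A i h - a i h) * B h j| + |∑ h, a i h * (B h j - b j h)| := abs_add_le _ _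
    _ ≤ (s : ℤ) + (t : ℤ) := add_le_add h1 h2
end

section
/- Farthest-point insertion step invariant: let P be a finite set of points in a metric space, and suppose centers c_1,…,c_{k+1} are chosen greedily so that each c_{m+1} ∈ P maximizes the distance to {c_1,…,c_m}. Let r be the distance from c_{k+1} to {c_1,…,c_k}. Then any two of the points c_1,…,c_{k+1} are at distance at least r from each other. -/
/-!
Every point of `P`, in particular `c (k+1)`, is at distance at most `infDist (c j) {c 0, …, c (j-1)}`
from the first `j` centers, by greediness at step `j - 1`; hence `r` is at most that quantity too,
as adding centers only shrinks distances. And `c i` with `i < j` is one of those first `j` centers.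
-/

open Finset Metric

section

variable {X : Type*} [MetricSpace X] [DecidableEq X]

theorem infDist_image_range_le_of_le (c : ℕ → X) (x : X) {m n : ℕ} (hm : 0 < m) (hmn : m ≤ n) :
    infDist x (↑((range n).image c) : Set X) ≤ infDist x (↑((range m).image c) : Set X) :=
  infDist_le_infDist_of_subset
    (by gcongr)
    ⟨c 0, by simpa using ⟨0, hm, rfl⟩⟩

theorem infDist_image_range_le_dist (c : ℕ → X) (x : X) {i j : ℕ} (hij : i < j) :
    infDist x (↑((range j).image c) : Set X) ≤ dist x (c i) :=
  infDist_le_dist_of_mem (by simpa using ⟨i, hij, rfl⟩)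

end

theorem farthest_point_insertion_separation_general
    {X : Type*} [MetricSpace X] [DecidableEq X] (P : Finset X) (k : ℕ)
    (c : ℕ → X) (hmem : ∀ m ≤ k + 1, c m ∈ P)
    (hgreedy : ∀ m ≤ k, ∀ x ∈ P,
      Metric.infDist x (↑((Finset.range (m + 1)).image c) : Set X) ≤
        Metric.infDist (c (m + 1)) (↑((Finset.range (m + 1)).image c) : Set X))
    (r : ℝ)
    (hr : r = Metric.infDist (c (k + 1)) (↑((Finset.range (k + 1)).image c) : Set X)) :
    ∀ i ≤ k + 1, ∀ j ≤ k + 1, i ≠ j → r ≤ dist (c i) (c j) := by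
  have separated : ∀ i j, i < j → j ≤ k + 1 → r ≤ dist (c j) (c i) := by
    intro i j hij hj
    obtain ⟨m, rfl⟩ : ∃ m, j = m + 1 := ⟨j - 1, by omega⟩
    calc r ≤ infDist (c (k + 1)) (↑((range (m + 1)).image c) : Set X) :=
          hr ▸ infDist_image_range_le_of_le c _ m.succ_pos hj
      _ ≤ infDist (c (m + 1)) (↑((range (m + 1)).image c) : Set X) :=
          hgreedy m (by omega) _ (hmem _ le_rfl)
      _ ≤ dist (c (m + 1)) (c i) := infDist_image_range_le_dist c _ hij
  intro i hi j hj hij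
  rcases hij.lt_or_gt with hlt | hgt
  · exact dist_comm (c i) (c j) ▸ separated i j hlt hj
  · exact separated j i hgt hi

theorem farthest_point_insertion_separation
    {X : Type*} [MetricSpace X] [DecidableEq X] (P : Finset X) (hP : P.Nonempty) (k : ℕ)
    (c : ℕ → X) (hmem : ∀ m ≤ k + 1, c m ∈ P)
    (hgreedy : ∀ m ≤ k, ∀ x ∈ P,
      Metric.infDist x (↑((Finset.range (m + 1)).image c) : Set X) ≤
        Metric.infDist (c (m + 1)) (↑((Finset.range (m + 1)).image c) : Set X))
    (r : ℝ)
    (hr : r = Metric.infDist (c (k + 1)) (↑((Finset.range (k + 1)).image c) : Set X)) :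
    ∀ i ≤ k + 1, ∀ j ≤ k + 1, i ≠ j → r ≤ dist (c i) (c j) :=
  farthest_point_insertion_separation_general P k c hmem hgreedy r hr
end

section
/- Gonzalez 2-approximation bound: let P be a finite set in a metric space and c_1,…,c_k centers chosen by farthest-point insertion from P, and let r = max_{x∈P} dist(x, {c_1,…,c_k}). If any set T of k points (anywhere in the space) has max_{x∈P} dist(x,T) = r*, then r ≤ 2·r*. -/
open Finset Metric

theorem gonzalez_two_approx
    {X : Type*} [MetricSpace X] [DecidableEq X] (P : Finset X) (hP : P.Nonempty)
    (k : ℕ) (hk : 1 ≤ k)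
    (c : ℕ → X) (hmem : ∀ m < k, c m ∈ P)
    (hgreedy : ∀ m, m + 1 < k → ∀ x ∈ P,
      Metric.infDist x (↑((Finset.range (m + 1)).image c) : Set X) ≤
        Metric.infDist (c (m + 1)) (↑((Finset.range (m + 1)).image c) : Set X))
    (r : ℝ)
    (hr : IsGreatest
      {d | ∃ x ∈ P, d = Metric.infDist x (↑((Finset.range k).image c) : Set X)} r)
    (T : Finset X) (hT : T.card = k) (rstar : ℝ)
    (hTstar : IsGreatest {d | ∃ x ∈ P, d = Metric.infDist x (↑T : Set X)} rstar) :
    r ≤ 2 * rstar := by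
  obtain ⟨xs, hxsP, hxs⟩ := hr.1
  have hTne : (↑T : Set X).Nonempty := by
    rw [Finset.coe_nonempty, ← Finset.card_pos, hT]; omega
  -- the sequence of k+1 points
  set p : ℕ → X := fun i => if i < k then c i else xs with hp
  have hpP : ∀ i, p i ∈ P := by
    intro i
    by_cases h : i < k
    · simp [hp, h, hmem i h]
    · simp [hp, h, hxsP]
  -- key separation: for i < j ≤ k, r ≤ dist (p i) (p j)
  have hsep : ∀ i j, i < j → j ≤ k → r ≤ dist (p i) (p j) := by
    intro i j hij hjk
    have hik : i < k := lt_of_lt_of_le hij hjk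
    have hpi : p i = c i := by simp [hp, hik]
    rcases lt_or_eq_of_le hjk with hj | hj
    · -- j < k : use greedy
      have hpj : p j = c j := by simp [hp, hj]
      obtain ⟨m, rfl⟩ : ∃ m, j = m + 1 := ⟨j - 1, by omega⟩
      have hsub : ((Finset.range (m+1)).image c : Set X) ⊆
          ((Finset.range k).image c : Set X) := by
        intro x hx
        simp only [Finset.coe_image, Finset.coe_range] at hx ⊢
        obtain ⟨a, ha, rfl⟩ := hx
        exact ⟨a, by simp at ha ⊢; omega, rfl⟩
      have hne1 : ((Finset.range (m+1)).image c : Set X).Nonempty :=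
        ⟨c 0, by simp; exact ⟨0, by omega, rfl⟩⟩
      have h1 : r ≤ infDist xs ((Finset.range (m+1)).image c : Set X) := by
        rw [hxs]
        exact infDist_le_infDist_of_subset hsub hne1
      have h2 := hgreedy m hj xs hxsP
      have h3 : infDist (c (m+1)) ((Finset.range (m+1)).image c : Set X) ≤
          dist (c (m+1)) (c i) :=
        infDist_le_dist_of_mem (by simp; exact ⟨i, by omega, rfl⟩)
      rw [hpi, hpj, dist_comm]
      linarith
    · -- j = k : p j = xs
      have hpj : p j = xs := by simp [hp, hj]
      rw [hpi, hpj, dist_comm, hxs]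
      exact infDist_le_dist_of_mem (by simp; exact ⟨i, hik, rfl⟩)
  -- nearest point in T
  have hnear : ∀ i, ∃ t ∈ T, infDist (p i) (↑T : Set X) = dist (p i) t := by
    intro i
    obtain ⟨t, ht, h⟩ := (T.finite_toSet.isCompact).exists_infDist_eq_dist hTne (p i)
    exact ⟨t, ht, h⟩
  choose f hfT hfd using hnear
  -- pigeonhole on range (k+1)
  have hcard : T.card < (Finset.range (k+1)).card := by simp [hT]
  obtain ⟨a, ha, b, hb, hab, hfab⟩ :=
    Finset.exists_ne_map_eq_of_card_lt_of_maps_to hcard (fun i _ => hfT i)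
  simp only [Finset.mem_range] at ha hb
  -- wlog a < b
  have key : ∀ a b : ℕ, a < b → b ≤ k → f a = f b → r ≤ 2 * rstar := by
    intro a b hlt hbk hfe
    have h1 : infDist (p a) (↑T : Set X) ≤ rstar := hTstar.2 ⟨p a, hpP a, rfl⟩
    have h2 : infDist (p b) (↑T : Set X) ≤ rstar := hTstar.2 ⟨p b, hpP b, rfl⟩
    have h3 : dist (p a) (p b) ≤ dist (p a) (f a) + dist (p b) (f b) := by
      rw [hfe]; exact dist_triangle_right _ _ _
    have h4 := hsep a b hlt hbk
    rw [← hfd a, ← hfd b] at h3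
    linarith
  rcases lt_or_gt_of_ne hab with h | h
  · exact key a b h (by omega) hfab
  · exact key b a h (by omega) hfab.symm
end
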